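/- arXiv:2404.08841 — 2 statements merged into one kernel-verified Lean document; each statement's English description precedes it below -/
import Mathlib

section
/- Let V be a congruence permutable variety and W an idempotent variety of the same similarity type without nullary operation symbols. If the intersection V ∩ W is the trivial variety, then the Mal'tsev product V ∘ W is a variety. -/
structure Signature where
  symbols : Type
  arity : symbols → ℕ

structure Alg (S : Signature) where
  carrier : Type
  op : ∀ ω : S.symbols, (Fin (S.arity ω) → carrier) → carrier
  nonempty : Nonempty carrier

inductive Term (S : Signature) (X : Type) : Type
  | var : X → Term S X
  | app : ∀ ω : S.symbols, (Fin (S.arity ω) → Term S X) → Term S X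

def Term.eval {S : Signature} {X : Type} (A : Alg S) (env : X → A.carrier) :
    Term S X → A.carrier
  | .var x => env x
  | .app ω ts => A.op ω fun i => (ts i).eval A env

/-- The algebra `A` satisfies the identity `u = v`. -/
def Alg.sat {S : Signature} (A : Alg S) {X : Type} (u v : Term S X) : Prop :=
  ∀ env : X → A.carrier, u.eval A env = v.eval A env

/-- An identity: a pair of terms in the countably many variables `x₀, x₁, …`. -/
abbrev Ident (S : Signature) := Term S ℕ × Term S ℕ

/-- `A` lies in the variety axiomatized by the set of identities `E`. -/
def Alg.Models {S : Signature} (A : Alg S) (E : Set (Ident S)) : Prop :=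
  ∀ e ∈ E, A.sat e.1 e.2

/-- The identity `u = v` holds in the variety axiomatized by `E`. -/
def Conseq {S : Signature} (E : Set (Ident S)) {X : Type} (u v : Term S X) : Prop :=
  ∀ A : Alg S, A.Models E → A.sat u v

/-- `a` is an idempotent element of `A`. -/
def Alg.IsIdem {S : Signature} (A : Alg S) (a : A.carrier) : Prop :=
  ∀ ω : S.symbols, A.op ω (fun _ => a) = a

/-- `B` is (the universe of) a subalgebra of `A`. -/
def Alg.IsSubuniverse {S : Signature} (A : Alg S) (B : Set A.carrier) : Prop :=
  ∀ ω (a : Fin (S.arity ω) → A.carrier), (∀ i, a i ∈ B) → A.op ω a ∈ B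

/-- The subalgebra of `A` on a nonempty subuniverse `B`. -/
def Alg.subAlg {S : Signature} (A : Alg S) (B : Set A.carrier)
    (h : A.IsSubuniverse B) (hne : B.Nonempty) : Alg S where
  carrier := B
  op ω a := ⟨A.op ω fun i => (a i : A.carrier), h ω _ fun i => (a i).2⟩
  nonempty := hne.to_subtype

/-- A congruence of `A`: an equivalence relation compatible with all operations. -/
structure Congruence {S : Signature} (A : Alg S) where
  rel : A.carrier → A.carrier → Prop
  iseqv : Equivalence rel
  compat : ∀ ω (a b : Fin (S.arity ω) → A.carrier),
    (∀ i, rel (a i) (b i)) → rel (A.op ω a) (A.op ω b)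

def Congruence.setoid {S : Signature} {A : Alg S} (θ : Congruence A) :
    Setoid A.carrier := ⟨θ.rel, θ.iseqv⟩

/-- The quotient algebra `A/θ`. -/
noncomputable def Alg.quot {S : Signature} (A : Alg S) (θ : Congruence A) : Alg S where
  carrier := Quotient θ.setoid
  op ω q := Quotient.mk θ.setoid (A.op ω fun i => (q i).out)
  nonempty := A.nonempty.map (Quotient.mk θ.setoid)

/-- Membership in the Mal'tsev product of the varieties axiomatized by `V` and `W`:
`A` has a congruence `θ` with `A/θ` in (the variety of) `W` such that every
`θ`-class which is a subalgebra of `A` is an algebra in (the variety of) `V`. -/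
def InMaltsev {S : Signature} (V W : Set (Ident S)) (A : Alg S) : Prop :=
  ∃ θ : Congruence A, (A.quot θ).Models W ∧
    ∀ a : A.carrier, ∀ h : A.IsSubuniverse {b | θ.rel a b},
      (A.subAlg {b | θ.rel a b} h ⟨a, θ.iseqv.refl a⟩).Models V

/-- A class of algebras is a variety iff it is axiomatized by some set of identities. -/
def IsVarietyClass {S : Signature} (K : Alg S → Prop) : Prop :=
  ∃ E : Set (Ident S), ∀ A : Alg S, K A ↔ A.Models E

/-- Relational composition: `a (r ∘ s) c` iff `a r b s c` for some `b`. -/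
def RelComp {α : Type} (r s : α → α → Prop) : α → α → Prop :=
  fun a c => ∃ b, r a b ∧ s b c

/-- Two relations `3`-permute if `r ∘ s ∘ r = s ∘ r ∘ s`. -/
def ThreePerm {α : Type} (r s : α → α → Prop) : Prop :=
  RelComp (RelComp r s) r = RelComp (RelComp s r) s

/-!
A Mal'tsev term `p` for `V` is read off the free `V`-algebra on three generators. Since `W` is
idempotent, the classes of a congruence `θ` witnessing `F ∈ V ∘ W` are subalgebras lying in `V`,
so `p` obeys the Mal'tsev identities inside each `θ`-class. For a surjective homomorphism
`g : F → A` this makes the image `g(θ)` transitive, hence a congruence of `A`; `A / g(θ)` is an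
image of `F / θ`, and finitely many elements of one `g(θ)`-class always come from a single
`θ`-class, so `g(θ)` witnesses `A ∈ V ∘ W`. Thus `V ∘ W` is closed under homomorphic images; it
contains its relatively free algebras, so Birkhoff's argument shows that it is a variety.
-/

section

variable {S : Signature}

namespace Alg

def IsHom (A B : Alg S) (f : A.carrier → B.carrier) : Prop :=
  ∀ ω a, f (A.op ω a) = B.op ω fun i => f (a i)

theorem IsHom.eval {A B : Alg S} {f : A.carrier → B.carrier} (hf : A.IsHom B f) {X : Type}
    (env : X → A.carrier) (t : Term S X) : f (t.eval A env) = t.eval B (f ∘ env) := by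
  induction t with
  | var x => rfl
  | app ω ts ih => exact (hf ω _).trans (congrArg (B.op ω) (funext ih))

theorem subAlg_val_isHom (A : Alg S) {B : Set A.carrier} (h : A.IsSubuniverse B)
    (hne : B.Nonempty) : (A.subAlg B h hne).IsHom A Subtype.val :=
  fun _ _ => rfl

end Alg

namespace Congruence

variable {A : Alg S} (θ : Congruence A)

theorem out_mk_rel (a : A.carrier) : θ.rel (Quotient.mk θ.setoid a).out a :=
  Quotient.exact (Quotient.out_eq (Quotient.mk θ.setoid a))

theorem mk_isHom : A.IsHom (A.quot θ) (Quotient.mk θ.setoid) := fun ω a =>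
  (Quotient.sound (θ.compat ω _ _ fun i => θ.out_mk_rel (a i))).symm

theorem eval_rel {X : Type} {env₁ env₂ : X → A.carrier} (h : ∀ x, θ.rel (env₁ x) (env₂ x))
    (t : Term S X) : θ.rel (t.eval A env₁) (t.eval A env₂) := by
  induction t with
  | var x => exact h x
  | app ω ts ih => exact θ.compat ω _ _ ih

theorem eval_rel₃ (t : Term S (Fin 3)) {a b c a' b' c' : A.carrier} (ha : θ.rel a a')
    (hb : θ.rel b b') (hc : θ.rel c c') : θ.rel (t.eval A ![a, b, c]) (t.eval A ![a', b', c']) :=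
  θ.eval_rel (fun i => by fin_cases i <;> assumption) t

theorem models_quot_iff (E : Set (Ident S)) :
    (A.quot θ).Models E ↔
      ∀ e ∈ E, ∀ env : ℕ → A.carrier, θ.rel (e.1.eval A env) (e.2.eval A env) := by
  refine ⟨fun hq e he env => Quotient.exact (s := θ.setoid) ?_, fun h e he env => ?_⟩
  · rw [θ.mk_isHom.eval, θ.mk_isHom.eval]
    exact hq e he _
  · obtain ⟨env, rfl⟩ := (Quotient.mk_surjective (s := θ.setoid)).comp_left env
    have hmk := Quotient.sound (s := θ.setoid) (h e he env)
    rwa [θ.mk_isHom.eval, θ.mk_isHom.eval] at hmk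

def ker {B : Alg S} {f : A.carrier → B.carrier} (hf : A.IsHom B f) : Congruence A where
  rel x y := f x = f y
  iseqv := ⟨fun _ => rfl, Eq.symm, Eq.trans⟩
  compat ω a b h := by
    rw [hf, hf]
    exact congrArg _ (funext h)

end Congruence

namespace Term

variable {X Y : Type}

def vars : Term S X → Set X
  | var x => {x}
  | app _ ts => ⋃ i, (ts i).vars

theorem vars_finite (t : Term S X) : t.vars.Finite := by
  induction t with
  | var x => exact Set.finite_singleton x
  | app ω ts ih => exact Set.finite_iUnion ih

theorem eval_congr (A : Alg S) {env₁ env₂ : X → A.carrier} {t : Term S X}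
    (h : Set.EqOn env₁ env₂ t.vars) : t.eval A env₁ = t.eval A env₂ := by
  induction t with
  | var x => exact h rfl
  | app ω ts ih =>
    exact congrArg (A.op ω) (funext fun i => ih i fun x hx => h (Set.mem_iUnion_of_mem i hx))

def rename (f : X → Y) : Term S X → Term S Y
  | var x => var (f x)
  | app ω ts => app ω fun i => (ts i).rename f

theorem eval_rename (A : Alg S) (f : X → Y) (env : Y → A.carrier) (t : Term S X) :
    (t.rename f).eval A env = t.eval A (env ∘ f) := by
  induction t with
  | var x => rfl
  | app ω ts ih => exact congrArg (A.op ω) (funext ih)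

end Term

def termAlg (S : Signature) (X : Type) (hX : Nonempty X) : Alg S :=
  ⟨Term S X, Term.app, hX.map Term.var⟩

def ValidIn (P : Alg S → Prop) {X : Type} (s t : Term S X) : Prop :=
  ∀ B : Alg S, P B → B.sat s t

def validIdents (P : Alg S → Prop) : Set (Ident S) :=
  {e | ValidIn P e.1 e.2}

def validCongr (P : Alg S → Prop) (X : Type) (hX : Nonempty X) :
    Congruence (termAlg S X hX) where
  rel := ValidIn P
  iseqv := ⟨fun _ _ _ _ => rfl, fun h B hB env => (h B hB env).symm,
    fun h₁ h₂ B hB env => (h₁ B hB env).trans (h₂ B hB env)⟩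
  compat ω _ _ h B hB env := congrArg (B.op ω) (funext fun i => h i B hB env)

noncomputable def freeAlg (P : Alg S → Prop) (X : Type) (hX : Nonempty X) : Alg S :=
  (termAlg S X hX).quot (validCongr P X hX)

namespace freeAlg

variable {P : Alg S → Prop} {X : Type} {hX : Nonempty X}

def mk (t : Term S X) : (freeAlg P X hX).carrier :=
  Quotient.mk _ t

noncomputable def lift (B : Alg S) (env : X → B.carrier) (q : (freeAlg P X hX).carrier) :
    B.carrier :=
  q.out.eval B env

variable {B : Alg S} (hB : ∀ s t : Term S X, ValidIn P s t → B.sat s t) (env : X → B.carrier)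
include hB

theorem lift_mk (t : Term S X) : lift B env (mk t : (freeAlg P X hX).carrier) = t.eval B env :=
  hB _ _ ((validCongr P X hX).out_mk_rel t) env

theorem lift_isHom : (freeAlg P X hX).IsHom B (lift B env) := fun ω q =>
  lift_mk hB env (Term.app ω fun i => (q i).out)

omit hB

theorem eq_of_forall_lift_eq {q r : (freeAlg P X hX).carrier}
    (h : ∀ B, P B → ∀ env : X → B.carrier, lift B env q = lift B env r) : q = r := by
  rw [← Quotient.out_eq q, ← Quotient.out_eq r]
  exact Quotient.sound h

theorem models {E : Set (Ident S)} (h : ∀ B, P B → B.Models E) :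
    (freeAlg P X hX).Models E := fun e he env =>
  eq_of_forall_lift_eq fun B hB envB => by
    rw [(lift_isHom (fun _ _ h => h B hB) envB).eval, (lift_isHom (fun _ _ h => h B hB) envB).eval]
    exact h B hB e he _

end freeAlg

theorem sat_of_models_validIdents {P : Alg S → Prop} {A : Alg S} (hA : A.Models (validIdents P))
    {X : Type} (hX : Nonempty X) {s t : Term S X} (hst : ValidIn P s t) : A.sat s t := by
  intro env
  obtain ⟨g, hg⟩ := Set.countable_iff_exists_subset_range.1
    (s.vars_finite.union t.vars_finite).countable
  have hgf : Set.EqOn env (env ∘ g ∘ Function.invFun g) (s.vars ∪ t.vars) :=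
    fun x hx => (congrArg env (Function.invFun_eq (hg hx))).symm
  have key := hA (s.rename (Function.invFun g), t.rename (Function.invFun g))
    (fun B hB envB => by simpa only [Term.eval_rename] using hst B hB _) (env ∘ g)
  simp only [Term.eval_rename] at key
  exact (Term.eval_congr A (hgf.mono Set.subset_union_left)).trans
    (key.trans (Term.eval_congr A (hgf.mono Set.subset_union_right)).symm)

theorem isVarietyClass_of_freeAlg_mem (K : Alg S → Prop)
    (hfree : ∀ X hX, K (freeAlg K X hX))
    (himage : ∀ {F A : Alg S} {g : F.carrier → A.carrier},
      F.IsHom A g → Function.Surjective g → K F → K A) :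
    IsVarietyClass K := by
  refine ⟨validIdents K, fun A => ⟨fun hA e he => he A hA, fun hA => ?_⟩⟩
  have hA' (s t : Term S A.carrier) : ValidIn K s t → A.sat s t :=
    sat_of_models_validIdents hA A.nonempty
  exact himage (freeAlg.lift_isHom hA' id)
    (fun a => ⟨freeAlg.mk (.var a), freeAlg.lift_mk hA' id _⟩) (hfree A.carrier A.nonempty)

def IsMaltsevTerm (V : Set (Ident S)) (p : Term S (Fin 3)) : Prop :=
  ∀ C : Alg S, C.Models V → ∀ x y : C.carrier, p.eval C ![x, y, y] = x ∧ p.eval C ![x, x, y] = y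

def freeAlg.jointKer (P : Alg S → Prop) (X : Type) (hX : Nonempty X)
    (R : ∀ B : Alg S, (X → B.carrier) → Prop) : Congruence (freeAlg P X hX) where
  rel q r := ∀ B, P B → ∀ env, R B env → lift B env q = lift B env r
  iseqv := ⟨fun _ _ _ _ _ => rfl, fun h B hB env hR => (h B hB env hR).symm,
    fun h₁ h₂ B hB env hR => (h₁ B hB env hR).trans (h₂ B hB env hR)⟩
  compat ω q r h B hB env hR := by
    have hlift := lift_isHom (hX := hX) (fun _ _ h => h B hB) env
    rw [hlift, hlift]
    exact congrArg _ (funext fun i => h i B hB env hR)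

/-- In the free `V`-algebra on `x₀, x₁, x₂`, the joint kernels `α` of the assignments with
`x₀ = x₁` and `β` of those with `x₁ = x₂` relate `x₀ α x₁ β x₂`; permuting them gives `m` with
`x₀ β m α x₂`, which says exactly that `m` is a Mal'tsev term. -/
theorem exists_isMaltsevTerm {V : Set (Ident S)}
    (hV : ∀ A : Alg S, A.Models V →
      ∀ α β : Congruence A, RelComp α.rel β.rel = RelComp β.rel α.rel) :
    ∃ p, IsMaltsevTerm V p := by
  let P : Alg S → Prop := (·.Models V)
  let F := freeAlg P (Fin 3) ⟨0⟩
  let x (i : Fin 3) : F.carrier := freeAlg.mk (.var i)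
  have lift_x (C : Alg S) (hC : P C) (env : Fin 3 → C.carrier) (i : Fin 3) :
      freeAlg.lift C env (x i) = env i :=
    freeAlg.lift_mk (fun _ _ h => h C hC) env _
  let α := freeAlg.jointKer P (Fin 3) ⟨0⟩ fun _ env => env 0 = env 1
  let β := freeAlg.jointKer P (Fin 3) ⟨0⟩ fun _ env => env 1 = env 2
  have hαβ : RelComp α.rel β.rel (x 0) (x 2) :=
    ⟨x 1, fun C hC env h => by rw [lift_x C hC, lift_x C hC]; exact h,
      fun C hC env h => by rw [lift_x C hC, lift_x C hC]; exact h⟩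
  obtain ⟨m, hβ, hα⟩ := hV F (freeAlg.models fun _ hB => hB) α β ▸ hαβ
  exact ⟨m.out, fun C hC a b =>
    ⟨(hβ C hC ![a, b, b] rfl).symm.trans (lift_x C hC _ 0),
      (hα C hC ![a, a, b] rfl).trans (lift_x C hC _ 2)⟩⟩

def IsMaltsevWitness (V W : Set (Ident S)) {A : Alg S} (θ : Congruence A) : Prop :=
  (A.quot θ).Models W ∧ ∀ a h, (A.subAlg {b | θ.rel a b} h ⟨a, θ.iseqv.refl a⟩).Models V

theorem IsMaltsevWitness.inMaltsev {V W : Set (Ident S)} {A : Alg S} {θ : Congruence A}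
    (hθ : IsMaltsevWitness V W θ) : InMaltsev V W A :=
  ⟨θ, hθ⟩

def freeAlg.maltsevCongr (V W : Set (Ident S)) (X : Type) (hX : Nonempty X) :
    Congruence (freeAlg (InMaltsev V W) X hX) where
  rel q r := ∀ (B : Alg S) (θ : Congruence B), IsMaltsevWitness V W θ →
    ∀ env, θ.rel (lift B env q) (lift B env r)
  iseqv := ⟨fun _ _ θ _ _ => θ.iseqv.refl _, fun h B θ hθ env => θ.iseqv.symm (h B θ hθ env),
    fun h₁ h₂ B θ hθ env => θ.iseqv.trans (h₁ B θ hθ env) (h₂ B θ hθ env)⟩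
  compat ω q r h B θ hθ env := by
    have hlift := lift_isHom (hX := hX) (fun _ _ h => h B hθ.inMaltsev) env
    rw [hlift, hlift]
    exact θ.compat ω _ _ fun i => h i B θ hθ env

section Idempotent

variable {V W : Set (Ident S)} (hW : ∀ A : Alg S, A.Models W → ∀ a : A.carrier, A.IsIdem a)
include hW

theorem isSubuniverse_class {A : Alg S} {θ : Congruence A} (hq : (A.quot θ).Models W)
    (a : A.carrier) : A.IsSubuniverse {b | θ.rel a b} := by
  intro ω f hf
  have hidem : θ.rel (A.op ω fun _ => a) a :=
    Quotient.exact (s := θ.setoid) ((θ.mk_isHom ω _).trans (hW _ hq _ ω))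
  exact θ.iseqv.trans (θ.iseqv.symm hidem) (θ.compat ω _ _ hf)

namespace IsMaltsevWitness

variable {A : Alg S} {θ : Congruence A} (hθ : IsMaltsevWitness V W θ)
include hθ

theorem eval_eq {e : Ident S} (he : e ∈ V) {a : A.carrier} {env : ℕ → A.carrier}
    (henv : ∀ n, θ.rel a (env n)) : e.1.eval A env = e.2.eval A env := by
  have hsub := isSubuniverse_class hW hθ.1 a
  have hval := A.subAlg_val_isHom hsub ⟨a, θ.iseqv.refl a⟩
  exact (hval.eval _ e.1).symm.trans
    ((congrArg Subtype.val (hθ.2 a hsub e he fun n => ⟨env n, henv n⟩)).trans (hval.eval _ e.2))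

theorem eval_maltsev {p : Term S (Fin 3)} (hp : IsMaltsevTerm V p) {x y : A.carrier}
    (hxy : θ.rel x y) : p.eval A ![x, y, y] = x ∧ p.eval A ![x, x, y] = y := by
  have hsub := isSubuniverse_class hW hθ.1 x
  let C := A.subAlg {b | θ.rel x b} hsub ⟨x, θ.iseqv.refl x⟩
  have hval : C.IsHom A Subtype.val := A.subAlg_val_isHom hsub _
  have hval₃ (a b c : C.carrier) :
      p.eval A ![a.val, b.val, c.val] = (p.eval C ![a, b, c]).val := by
    rw [hval.eval]
    congr 1
    funext i
    fin_cases i <;> rfl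
  obtain ⟨hl, hr⟩ := hp _ (hθ.2 x hsub) ⟨x, θ.iseqv.refl x⟩ ⟨y, hxy⟩
  exact ⟨(hval₃ _ _ _).trans (congrArg Subtype.val hl),
    (hval₃ _ _ _).trans (congrArg Subtype.val hr)⟩

end IsMaltsevWitness

section Image

variable {p : Term S (Fin 3)} (hp : IsMaltsevTerm V p) {F A : Alg S}
  {g : F.carrier → A.carrier} (hg : F.IsHom A g) {θ : Congruence F}
  (hθ : IsMaltsevWitness V W θ)
include hp hg hθ

theorem IsMaltsevWitness.exists_rel_of_rel_of_eq_of_rel {x y y' z : F.carrier}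
    (hxy : θ.rel x y) (hy : g y = g y') (hyz : θ.rel y' z) :
    ∃ x' z', g x' = g x ∧ g z' = g z ∧ θ.rel x' z' :=
  ⟨p.eval F ![x, y, y'], p.eval F ![y, y, z],
    Eq.trans ((Congruence.ker hg).eval_rel₃ p rfl rfl hy.symm)
      (congrArg g (hθ.eval_maltsev hW hp hxy).1),
    Eq.trans ((Congruence.ker hg).eval_rel₃ p hy hy rfl)
      (congrArg g (hθ.eval_maltsev hW hp hyz).2),
    θ.eval_rel₃ p hxy (θ.iseqv.refl y) hyz⟩

def IsMaltsevWitness.map (hsurj : Function.Surjective g) : Congruence A where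
  rel a b := ∃ x y, g x = a ∧ g y = b ∧ θ.rel x y
  iseqv := by
    refine ⟨fun a => ?_, fun ⟨x, y, hx, hy, hxy⟩ => ⟨y, x, hy, hx, θ.iseqv.symm hxy⟩, ?_⟩
    · obtain ⟨x, rfl⟩ := hsurj a
      exact ⟨x, x, rfl, rfl, θ.iseqv.refl x⟩
    · rintro _ _ _ ⟨x, y, rfl, rfl, hxy⟩ ⟨y', z, hy, rfl, hyz⟩
      exact hθ.exists_rel_of_rel_of_eq_of_rel hW hp hg hxy hy.symm hyz
  compat ω a b h := by
    choose x y hx hy hxy using h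
    exact ⟨F.op ω x, F.op ω y, (hg ω x).trans (congrArg _ (funext hx)),
      (hg ω y).trans (congrArg _ (funext hy)), θ.compat ω x y hxy⟩

theorem IsMaltsevWitness.map_models_quot (hsurj : Function.Surjective g) :
    (A.quot (hθ.map hW hp hg hsurj)).Models W := by
  refine ((hθ.map hW hp hg hsurj).models_quot_iff W).2 fun e he env => ?_
  obtain ⟨x, rfl⟩ := hsurj.comp_left env
  exact ⟨_, _, hg.eval x e.1, hg.eval x e.2, (θ.models_quot_iff W).1 hθ.1 e he x⟩

theorem IsMaltsevWitness.image_class_directed (a₀ : A.carrier) :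
    Directed (· ⊆ ·) fun x : {x // g x = a₀} => g '' {y | θ.rel x y} := by
  rintro ⟨x, hx⟩ ⟨x', hx'⟩
  have hxx' : g x = g x' := hx.trans hx'.symm
  refine ⟨⟨p.eval F ![x, x, x'], ?_⟩, ?_, ?_⟩
  · exact Eq.trans ((Congruence.ker hg).eval_rel₃ p hxx' hxx' rfl)
      ((congrArg g (hθ.eval_maltsev hW hp (θ.iseqv.refl x')).2).trans hx')
  · rintro _ ⟨u, hu, rfl⟩
    exact ⟨p.eval F ![u, x, x'], θ.eval_rel₃ p hu (θ.iseqv.refl x) (θ.iseqv.refl x'),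
      Eq.trans ((Congruence.ker hg).eval_rel₃ p rfl rfl hxx'.symm)
        (congrArg g (hθ.eval_maltsev hW hp (θ.iseqv.symm hu)).1)⟩
  · rintro _ ⟨v, hv, rfl⟩
    exact ⟨p.eval F ![x, x, v], θ.eval_rel₃ p (θ.iseqv.refl x) (θ.iseqv.refl x) hv,
      Eq.trans ((Congruence.ker hg).eval_rel₃ p hxx' hxx' rfl)
        (congrArg g (hθ.eval_maltsev hW hp hv).2)⟩

theorem IsMaltsevWitness.exists_subset_image_class (hsurj : Function.Surjective g)
    {a₀ : A.carrier} {s : Set A.carrier} (hs : s.Finite)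
    (hsub : ∀ b ∈ s, (hθ.map hW hp hg hsurj).rel a₀ b) :
    ∃ z, s ⊆ g '' {y | θ.rel z y} := by
  have : Nonempty {x // g x = a₀} := ⟨⟨_, (hsurj a₀).choose_spec⟩⟩
  have hcover : (hs.toFinset : Set A.carrier) ⊆ ⋃ x : {x // g x = a₀}, g '' {y | θ.rel x y} := by
    intro b hb
    obtain ⟨x, y, hx, hy, hxy⟩ := hsub b (hs.mem_toFinset.1 hb)
    exact Set.mem_iUnion.2 ⟨⟨x, hx⟩, y, hxy, hy⟩
  obtain ⟨⟨z, _⟩, hz⟩ :=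
    (hθ.image_class_directed hW hp hg a₀).exists_mem_subset_of_finset_subset_biUnion hcover
  exact ⟨z, hs.coe_toFinset ▸ hz⟩

theorem IsMaltsevWitness.map_class_models (hsurj : Function.Surjective g) (a₀ : A.carrier)
    (hZ : A.IsSubuniverse {b | (hθ.map hW hp hg hsurj).rel a₀ b}) :
    (A.subAlg {b | (hθ.map hW hp hg hsurj).rel a₀ b} hZ
      ⟨a₀, (hθ.map hW hp hg hsurj).iseqv.refl a₀⟩).Models V := by
  intro e he env
  let vars := e.1.vars ∪ e.2.vars
  obtain ⟨z, hz⟩ := hθ.exists_subset_image_class hW hp hg hsurj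
    ((e.1.vars_finite.union e.2.vars_finite).image fun n => (env n).val)
    (by rintro _ ⟨n, -, rfl⟩; exact (env n).2)
  have hc (n : ℕ) : ∃ c, θ.rel z c ∧ (n ∈ vars → g c = (env n).val) := by
    by_cases hn : n ∈ vars
    · obtain ⟨c, hc, hgc⟩ := hz ⟨n, hn, rfl⟩
      exact ⟨c, hc, fun _ => hgc⟩
    · exact ⟨z, θ.iseqv.refl z, fun h => absurd h hn⟩
  choose c hcθ hcg using hc
  have hval := A.subAlg_val_isHom hZ ⟨a₀, (hθ.map hW hp hg hsurj).iseqv.refl a₀⟩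
  apply Subtype.ext
  calc (e.1.eval _ env).val = e.1.eval A (Subtype.val ∘ env) := hval.eval env e.1
    _ = e.1.eval A (g ∘ c) := Term.eval_congr A fun n hn => (hcg n (Or.inl hn)).symm
    _ = g (e.1.eval F c) := (hg.eval c e.1).symm
    _ = g (e.2.eval F c) := congrArg g (hθ.eval_eq hW he hcθ)
    _ = e.2.eval A (g ∘ c) := hg.eval c e.2
    _ = e.2.eval A (Subtype.val ∘ env) := Term.eval_congr A fun n hn => hcg n (Or.inr hn)
    _ = (e.2.eval _ env).val := (hval.eval env e.2).symm

end Image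

theorem inMaltsev_of_surjective {p : Term S (Fin 3)} (hp : IsMaltsevTerm V p) {F A : Alg S}
    {g : F.carrier → A.carrier} (hg : F.IsHom A g) (hsurj : Function.Surjective g)
    (hF : InMaltsev V W F) : InMaltsev V W A := by
  obtain ⟨θ, hθ⟩ : ∃ θ : Congruence F, IsMaltsevWitness V W θ := hF
  exact ⟨_, hθ.map_models_quot hW hp hg hsurj, hθ.map_class_models hW hp hg hsurj⟩

theorem freeAlg_inMaltsev (X : Type) (hX : Nonempty X) :
    InMaltsev V W (freeAlg (InMaltsev V W) X hX) := by
  refine ⟨freeAlg.maltsevCongr V W X hX, ?_, fun a₀ hZ e he env => ?_⟩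
  · refine ((freeAlg.maltsevCongr V W X hX).models_quot_iff W).2 fun e he env B θ hθ envB => ?_
    have hlift := freeAlg.lift_isHom (hX := hX) (fun _ _ h => h B hθ.inMaltsev) envB
    rw [hlift.eval, hlift.eval]
    exact (θ.models_quot_iff W).1 hθ.1 e he _
  · have hval := (freeAlg (InMaltsev V W) X hX).subAlg_val_isHom hZ
      ⟨a₀, (freeAlg.maltsevCongr V W X hX).iseqv.refl a₀⟩
    refine Subtype.ext ((hval.eval env e.1).trans (Eq.trans ?_ (hval.eval env e.2).symm))
    refine freeAlg.eq_of_forall_lift_eq fun B hB envB => ?_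
    have hlift := freeAlg.lift_isHom (hX := hX) (fun _ _ h => h B hB) envB
    obtain ⟨θ, hθ⟩ : ∃ θ : Congruence B, IsMaltsevWitness V W θ := hB
    rw [hlift.eval, hlift.eval]
    exact hθ.eval_eq hW he fun n => (env n).2 B θ hθ envB

end Idempotent

end

theorem stmt_16_general (S : Signature)
    (V W : Set (Ident S))
    (hVperm : ∀ A : Alg S, A.Models V →
      ∀ α β : Congruence A, RelComp α.rel β.rel = RelComp β.rel α.rel)
    (hWidem : ∀ A : Alg S, A.Models W → ∀ a : A.carrier, A.IsIdem a) :
    IsVarietyClass (InMaltsev V W) := by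
  obtain ⟨p, hp⟩ := exists_isMaltsevTerm hVperm
  exact isVarietyClass_of_freeAlg_mem _ (freeAlg_inMaltsev hWidem)
    fun hg hsurj hF => inMaltsev_of_surjective hWidem hp hg hsurj hF

/-- Let `V` be a congruence permutable variety and `W` an
idempotent variety of the same type without nullary operation symbols. If
`V ∩ W` is the trivial variety, then the Mal'tsev product `V ∘ W` is a
variety. -/
theorem stmt_16 (S : Signature) (h0 : ∀ ω : S.symbols, 0 < S.arity ω)
    (V W : Set (Ident S))
    (hVperm : ∀ A : Alg S, A.Models V →
      ∀ α β : Congruence A, RelComp α.rel β.rel = RelComp β.rel α.rel)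
    (hWidem : ∀ A : Alg S, A.Models W → ∀ a : A.carrier, A.IsIdem a)
    (htriv : ∀ A : Alg S, A.Models V → A.Models W → Subsingleton A.carrier) :
    IsVarietyClass (InMaltsev V W) :=
  stmt_16_general S V W hVperm hWidem
end

section
/- There exist varieties V and W of the same type with trivial intersection V ∩ W such that the Mal'tsev product V ∘ W is not a variety. Concretely, let V be the variety of all commutative groupoids and W = LZ the variety of left-zero bands (groupoids satisfying x·y = x), so V ∩ LZ is trivial. Let A = {0,1,2,3} be the groupoid with multiplication 0·y = 0 for all y; 1·0 = 0, 1·1 = 1, 1·2 = 0, 1·3 = 0; 2·y = 2 for all y; 3·0 = 2, 3·1 = 3, 3·2 = 2, 3·3 = 3. Then A belongs to V ∘ LZ (its LZ-replica congruence has the classes {0,1} and {2,3}, which are semilattices), but the quotient B = A/θ by the congruence θ with classes {0,2}, {1}, {3} does not belong to V ∘ LZ. Hence V ∘ LZ is not closed under homomorphic images and is not a variety. -/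
/-- The type of groupoids: a single binary operation symbol. -/
abbrev Sig2 : Signature := ⟨Unit, fun _ => 2⟩

/-- The binary operation on terms. -/
def mulT {X : Type} (u v : Term Sig2 X) : Term Sig2 X :=
  Term.app () ![u, v]

/-- The variety of commutative groupoids: `x·y = y·x`. -/
def CommSet : Set (Ident Sig2) :=
  {(mulT (Term.var 0) (Term.var 1), mulT (Term.var 1) (Term.var 0))}

/-- The variety `LZ` of left-zero bands: `x·y = x`. -/
def LZSet : Set (Ident Sig2) :=
  {(mulT (Term.var 0) (Term.var 1), Term.var 0)}

/-- The multiplication table of the groupoid `A` on `{0,1,2,3}`. -/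
def mulA : Fin 4 → Fin 4 → Fin 4 :=
  ![![0, 0, 0, 0], ![0, 1, 0, 0], ![2, 2, 2, 2], ![2, 3, 2, 3]]

/-- The groupoid `A`. -/
abbrev AlgA : Alg Sig2 :=
  ⟨Fin 4, fun _ a => mulA (a 0) (a 1), ⟨0⟩⟩

/-- The partition `{0,2}, {1}, {3}` of `A`, coded by a map to `Fin 3`. -/
def clsA : Fin 4 → Fin 3 := ![0, 1, 0, 2]

/-- The congruence `θ` of `A` with the classes `{0,2}, {1}, {3}`. -/
def thetaA : Congruence AlgA where
  rel a b := clsA a = clsA b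
  iseqv := ⟨fun _ => rfl, Eq.symm, Eq.trans⟩
  compat := by decide

/-!
The left-zero replica congruence of a groupoid must identify each product `x·y` with `x`.
In `A` the partition `{0,1}, {2,3}` already does so, and its classes are commutative
subgroupoids, so `A ∈ V ∘ LZ`. In `B = A/θ` however `0 = 1·3` and `0 = 2 = 3·0`, so the
replica congruence is total; the only class is then `B` itself, which is not commutative
(`1·3 = 0` but `3·1 = 3`), so `B ∉ V ∘ LZ`. Since every variety is closed under
quotients, `V ∘ LZ` is not a variety.
-/

section General

variable {S : Signature}

theorem Alg.quot_op (A : Alg S) (θ : Congruence A) (ω : S.symbols)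
    (a : Fin (S.arity ω) → A.carrier) :
    (A.quot θ).op ω (fun i => Quotient.mk θ.setoid (a i)) = Quotient.mk θ.setoid (A.op ω a) :=
  Quotient.sound <| θ.compat ω _ _ fun i => @Quotient.mk_out _ θ.setoid (a i)

theorem Term.eval_quot (A : Alg S) (θ : Congruence A) {X : Type}
    (env : X → A.carrier) (t : Term S X) :
    t.eval (A.quot θ) (fun x => Quotient.mk θ.setoid (env x))
      = Quotient.mk θ.setoid (t.eval A env) := by
  induction t with
  | var x => rfl
  | app ω ts ih =>
    show (A.quot θ).op ω (fun i => (ts i).eval (A.quot θ) _) = _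
    simp only [ih, Alg.quot_op]
    rfl

theorem Alg.Models.quot {A : Alg S} {E : Set (Ident S)} (h : A.Models E) (θ : Congruence A) :
    (A.quot θ).Models E := by
  intro e he env
  have henv : env = fun x => Quotient.mk θ.setoid (env x).out :=
    funext fun x => (Quotient.out_eq _).symm
  rw [henv, Term.eval_quot, Term.eval_quot, h e he]

theorem IsVarietyClass.quot {K : Alg S → Prop} (hK : IsVarietyClass K) {A : Alg S}
    (hA : K A) (θ : Congruence A) : K (A.quot θ) := by
  obtain ⟨E, hE⟩ := hK
  exact (hE _).mpr (((hE A).mp hA).quot θ)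

end General

section Groupoid

variable (A : Alg Sig2)

theorem Term.eval_mulT {X : Type} (env : X → A.carrier) (u v : Term Sig2 X) :
    (mulT u v).eval A env = A.op () ![u.eval A env, v.eval A env] := by
  show A.op () (fun i => (![u, v] i).eval A env) = _
  congr 1
  funext i
  fin_cases i <;> rfl

theorem Alg.models_commSet_iff :
    A.Models CommSet ↔ ∀ x y : A.carrier, A.op () ![x, y] = A.op () ![y, x] := by
  constructor
  · intro h x y
    simpa [Term.eval_mulT, Term.eval] using h _ rfl fun n => if n = 0 then x else y
  · rintro h _ rfl env
    exact (Term.eval_mulT A env _ _).trans <| (h _ _).trans (Term.eval_mulT A env _ _).symm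

theorem Alg.models_lzSet_iff :
    A.Models LZSet ↔ ∀ x y : A.carrier, A.op () ![x, y] = x := by
  constructor
  · intro h x y
    simpa [Term.eval_mulT, Term.eval] using h _ rfl fun n => if n = 0 then x else y
  · rintro h _ rfl env
    exact (Term.eval_mulT A env _ _).trans (h _ _)

theorem subsingleton_of_models_commSet_of_models_lzSet (hc : A.Models CommSet)
    (hl : A.Models LZSet) : Subsingleton A.carrier := by
  refine ⟨fun x y => ?_⟩
  rw [A.models_lzSet_iff] at hl
  calc x = A.op () ![x, y] := (hl x y).symm
    _ = A.op () ![y, x] := (A.models_commSet_iff.mp hc) x y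
    _ = y := hl y x

theorem Alg.subAlg_models_commSet_iff {B : Set A.carrier} (h : A.IsSubuniverse B)
    (hne : B.Nonempty) :
    (A.subAlg B h hne).Models CommSet ↔
      ∀ x ∈ B, ∀ y ∈ B, A.op () ![x, y] = A.op () ![y, x] := by
  have hval : ∀ x y : B,
      Subtype.val (p := (· ∈ B)) ((A.subAlg B h hne).op () ![x, y]) = A.op () ![x.1, y.1] := by
    intro x y
    show A.op () (fun i => (![x, y] i : A.carrier)) = _
    congr 1
    funext i
    fin_cases i <;> rfl
  rw [models_commSet_iff]
  constructor
  · intro hc x hx y hy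
    simpa only [hval] using congrArg Subtype.val (hc (⟨x, hx⟩ : B) (⟨y, hy⟩ : B))
  · intro hc x y
    exact Subtype.ext ((hval x y).trans ((hc x.1 x.2 y.1 y.2).trans (hval y x).symm))

theorem Alg.quot_op_pair (θ : Congruence A) (x y : A.carrier) :
    (A.quot θ).op () ![Quotient.mk θ.setoid x, Quotient.mk θ.setoid y]
      = Quotient.mk θ.setoid (A.op () ![x, y]) := by
  rw [← A.quot_op θ () ![x, y]]
  congr 1
  funext i
  fin_cases i <;> rfl

theorem Alg.quot_models_lzSet_iff (θ : Congruence A) :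
    (A.quot θ).Models LZSet ↔ ∀ x y : A.carrier, θ.rel (A.op () ![x, y]) x := by
  rw [models_lzSet_iff]
  constructor
  · intro h x y
    have hxy := h (Quotient.mk θ.setoid x) (Quotient.mk θ.setoid y)
    rw [quot_op_pair] at hxy
    exact Quotient.exact hxy
  · intro h qx qy
    induction qx using Quotient.inductionOn
    induction qy using Quotient.inductionOn
    rw [quot_op_pair]
    exact Quotient.sound (h _ _)

/-- A total congruence has the whole groupoid as its only class, which then has to be
commutative. -/
theorem not_inMaltsev_commSet_lzSet {a x y : A.carrier}
    (hxy : A.op () ![x, y] ≠ A.op () ![y, x])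
    (htotal : ∀ θ : Congruence A, (∀ u v, θ.rel (A.op () ![u, v]) u) → ∀ b, θ.rel a b) :
    ¬ InMaltsev CommSet LZSet A := by
  rintro ⟨θ, hLZ, hclasses⟩
  have hall := htotal θ ((A.quot_models_lzSet_iff θ).mp hLZ)
  have hcomm := (A.subAlg_models_commSet_iff _ _).mp (hclasses a fun _ _ _ => hall _)
  exact hxy (hcomm x (hall x) y (hall y))

end Groupoid

def halfA : Fin 4 → Fin 2 := ![0, 0, 1, 1]

/-- The `LZ`-replica congruence of `AlgA`. -/
def phiA : Congruence AlgA where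
  rel a b := halfA a = halfA b
  iseqv := ⟨fun _ => rfl, Eq.symm, Eq.trans⟩
  compat := by decide

theorem halfA_mulA : ∀ x y : Fin 4, halfA (mulA x y) = halfA x := by decide

theorem mulA_comm_of_halfA_eq :
    ∀ a x : Fin 4, halfA a = halfA x → ∀ y, halfA a = halfA y → mulA x y = mulA y x := by
  decide

theorem algA_inMaltsev : InMaltsev CommSet LZSet AlgA :=
  ⟨phiA, (AlgA.quot_models_lzSet_iff phiA).mpr halfA_mulA,
    fun a _ => (AlgA.subAlg_models_commSet_iff _ _).mpr (mulA_comm_of_halfA_eq a)⟩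

theorem quotA_op (x y : Fin 4) :
    (AlgA.quot thetaA).op () ![Quotient.mk thetaA.setoid x, Quotient.mk thetaA.setoid y]
      = Quotient.mk thetaA.setoid (mulA x y) :=
  AlgA.quot_op_pair thetaA x y

theorem quotA_not_inMaltsev : ¬ InMaltsev CommSet LZSet (AlgA.quot thetaA) := by
  have mk_eq : ∀ x y : Fin 4, clsA x = clsA y →
      Quotient.mk thetaA.setoid x = Quotient.mk thetaA.setoid y :=
    fun _ _ => @Quotient.sound _ thetaA.setoid _ _
  refine not_inMaltsev_commSet_lzSet _ (x := Quotient.mk thetaA.setoid 1)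
    (y := Quotient.mk thetaA.setoid 3) (a := Quotient.mk thetaA.setoid 0) ?_ ?_
  · rw [quotA_op, quotA_op]
    exact fun h => (by decide : clsA (mulA 1 3) ≠ clsA (mulA 3 1)) (Quotient.exact h)
  · intro θ hθ b
    induction b using Quotient.inductionOn with | h c => ?_
    have h13 := hθ (Quotient.mk thetaA.setoid 1) (Quotient.mk thetaA.setoid 3)
    have h30 := hθ (Quotient.mk thetaA.setoid 3) (Quotient.mk thetaA.setoid 0)
    rw [quotA_op, mk_eq (mulA 1 3) 0 (by decide)] at h13
    rw [quotA_op, mk_eq (mulA 3 0) 0 (by decide)] at h30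
    fin_cases c
    · exact θ.iseqv.refl _
    · exact h13
    · exact mk_eq 2 0 rfl ▸ θ.iseqv.refl _
    · exact h30

/-- There are varieties with trivial intersection whose
Mal'tsev product is not a variety: for `V` the variety of commutative groupoids
and `LZ` the variety of left-zero bands, `V ∩ LZ` is trivial, the groupoid `A`
above belongs to `V ∘ LZ`, yet its quotient `B = A/θ` by the congruence `θ` with
classes `{0,2}, {1}, {3}` does not; hence `V ∘ LZ` is not closed under
homomorphic images and is not a variety. -/
theorem stmt_19 :
    (∀ B : Alg Sig2, B.Models CommSet → B.Models LZSet →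
      Subsingleton B.carrier) ∧
    InMaltsev CommSet LZSet AlgA ∧
    ¬ InMaltsev CommSet LZSet (AlgA.quot thetaA) ∧
    ¬ IsVarietyClass (InMaltsev CommSet LZSet) :=
  ⟨subsingleton_of_models_commSet_of_models_lzSet, algA_inMaltsev, quotA_not_inMaltsev,
    fun hK => quotA_not_inMaltsev (hK.quot algA_inMaltsev thetaA)⟩
end
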